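/- (SDP characterization of the twisted-channel simulation cost.) For a Hermitian-preserving map ℰ with Choi matrix J^ℰ, the minimal α ≥ 0 such that ℰ = α·𝒯 for some twisted channel 𝒯 equals the optimal value of: minimize α subject to J^ℰ = M⁺ − M⁻, M^± ⪰ 0, and tr_B[M⁺ + M⁻] = α·𝟙_A. -/

import Mathlib

/-!
Under the Choi isomorphism a twisted channel `∑ⱼ sⱼ • Mⱼ` is exactly a splitting `J = P - N` of its
Choi matrix into positive semidefinite parts (`P` collects the `Mⱼ` with sign `+1`, `N` the rest)
with `tr_B (P + N) = 𝟙`, the Choi form of trace preservation of `∑ⱼ Mⱼ`; conversely `P` and `N`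
are the Choi matrices of a two-outcome instrument. Rescaling by `α > 0` then matches the two feasible
sets. What remains are the degenerate cases, where both infima are `0` because `sInf ∅ = 0` and
`sInf univ = 0` in `ℝ`: `α = 0` (which forces `E = 0`), `dA = 0`, and the case where no twisted
channel exists at all (`dB = 0 < dA`).
-/

open Matrix BigOperators ComplexOrder

/-- The Choi matrix of a linear map between matrix algebras:
`J^E = Σ_{j,k} |j⟩⟨k| ⊗ E(|j⟩⟨k|)`, indexed by pairs. -/
noncomputable def choi {dA dB : ℕ}
    (E : Matrix (Fin dA) (Fin dA) ℂ →ₗ[ℂ] Matrix (Fin dB) (Fin dB) ℂ) :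
    Matrix (Fin dA × Fin dB) (Fin dA × Fin dB) ℂ :=
  fun p q => E (Matrix.single p.1 q.1 1) p.2 q.2

/-- A map is Hermitian-preserving if it maps Hermitian matrices to Hermitian matrices. -/
def HermitianPreserving {dA dB : ℕ}
    (E : Matrix (Fin dA) (Fin dA) ℂ →ₗ[ℂ] Matrix (Fin dB) (Fin dB) ℂ) : Prop :=
  ∀ H : Matrix (Fin dA) (Fin dA) ℂ, H.IsHermitian → (E H).IsHermitian

/-- Trace-preserving. -/
def IsTP {dA dB : ℕ}
    (E : Matrix (Fin dA) (Fin dA) ℂ →ₗ[ℂ] Matrix (Fin dB) (Fin dB) ℂ) : Prop :=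
  ∀ X : Matrix (Fin dA) (Fin dA) ℂ, (E X).trace = X.trace

/-- Trace-non-increasing on positive semidefinite inputs. -/
def IsTNI {dA dB : ℕ}
    (E : Matrix (Fin dA) (Fin dA) ℂ →ₗ[ℂ] Matrix (Fin dB) (Fin dB) ℂ) : Prop :=
  ∀ ρ : Matrix (Fin dA) (Fin dA) ℂ, ρ.PosSemidef → (E ρ).trace ≤ ρ.trace

/-- Completely positive (characterized via positivity of the Choi matrix) and trace-preserving. -/
def IsCPTP {dA dB : ℕ}
    (E : Matrix (Fin dA) (Fin dA) ℂ →ₗ[ℂ] Matrix (Fin dB) (Fin dB) ℂ) : Prop :=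
  (choi E).PosSemidef ∧ IsTP E

/-- Completely positive and trace-non-increasing. -/
def IsCPTN {dA dB : ℕ}
    (E : Matrix (Fin dA) (Fin dA) ℂ →ₗ[ℂ] Matrix (Fin dB) (Fin dB) ℂ) : Prop :=
  (choi E).PosSemidef ∧ IsTNI E

/-- A twisted channel: `T = Σ_j s_j M_j` with `s_j ∈ {+1,-1}` and `{M_j}` a quantum
instrument (each `M_j` CPTN and `Σ_j M_j` CPTP). -/
def TwistedChannel {dA dB : ℕ}
    (T : Matrix (Fin dA) (Fin dA) ℂ →ₗ[ℂ] Matrix (Fin dB) (Fin dB) ℂ) : Prop :=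
  ∃ (n : ℕ) (s : Fin n → ℂ)
    (M : Fin n → (Matrix (Fin dA) (Fin dA) ℂ →ₗ[ℂ] Matrix (Fin dB) (Fin dB) ℂ)),
    (∀ j, s j = 1 ∨ s j = -1) ∧ (∀ j, IsCPTN (M j)) ∧ IsCPTP (∑ j, M j) ∧
    T = ∑ j, s j • M j

/-- Partial trace over the second (B) factor. -/
noncomputable def ptraceB {dA dB : ℕ}
    (M : Matrix (Fin dA × Fin dB) (Fin dA × Fin dB) ℂ) : Matrix (Fin dA) (Fin dA) ℂ :=
  fun a a' => ∑ b, M (a, b) (a', b)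

namespace Matrix

variable {n : Type*} [Fintype n]

lemma PosSemidef.sum_entries_nonneg {A : Matrix n n ℂ} (hA : A.PosSemidef) :
    0 ≤ ∑ i, ∑ j, A i j := by
  simpa [dotProduct, mulVec, Finset.sum_comm (γ := n)] using
    hA.dotProduct_mulVec_nonneg (fun _ => 1)

lemma PosSemidef.sum_mul_entries_nonneg {A B : Matrix n n ℂ} (hA : A.PosSemidef)
    (hB : B.PosSemidef) : 0 ≤ ∑ i, ∑ j, A i j * B i j :=
  (hA.hadamard hB).sum_entries_nonneg

end Matrix

section PartialTrace

variable {dA dB : ℕ}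

lemma ptraceB_eq_sum_submatrix (M : Matrix (Fin dA × Fin dB) (Fin dA × Fin dB) ℂ) :
    ptraceB M = ∑ b, M.submatrix (·, b) (·, b) := by
  ext a a'
  simp [ptraceB, Matrix.sum_apply]

lemma Matrix.PosSemidef.ptraceB {M : Matrix (Fin dA × Fin dB) (Fin dA × Fin dB) ℂ}
    (hM : M.PosSemidef) : (ptraceB M).PosSemidef := by
  rw [ptraceB_eq_sum_submatrix]
  exact Matrix.posSemidef_sum _ fun b _ => hM.submatrix _

lemma trace_ptraceB (M : Matrix (Fin dA × Fin dB) (Fin dA × Fin dB) ℂ) :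
    (ptraceB M).trace = M.trace := by
  simp [ptraceB, Matrix.trace, Fintype.sum_prod_type]

lemma ptraceB_add (M N : Matrix (Fin dA × Fin dB) (Fin dA × Fin dB) ℂ) :
    ptraceB (M + N) = ptraceB M + ptraceB N := by
  ext a a'
  simp [ptraceB, Finset.sum_add_distrib]

lemma ptraceB_smul (c : ℂ) (M : Matrix (Fin dA × Fin dB) (Fin dA × Fin dB) ℂ) :
    ptraceB (c • M) = c • ptraceB M := by
  ext a a'
  simp [ptraceB, Finset.mul_sum]

end PartialTrace

section Choi

variable {dA dB : ℕ}

noncomputable def fromChoi (M : Matrix (Fin dA × Fin dB) (Fin dA × Fin dB) ℂ) :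
    Matrix (Fin dA) (Fin dA) ℂ →ₗ[ℂ] Matrix (Fin dB) (Fin dB) ℂ where
  toFun X := Matrix.of fun b b' => ∑ j, ∑ k, X j k * M (j, b) (k, b')
  map_add' X Y := by
    ext b b'
    simp [add_mul, Finset.sum_add_distrib]
  map_smul' c X := by
    ext b b'
    simp [Finset.mul_sum, mul_assoc]

lemma choi_fromChoi (M : Matrix (Fin dA × Fin dB) (Fin dA × Fin dB) ℂ) :
    choi (fromChoi M) = M := by
  ext p q
  simp [choi, fromChoi, Matrix.single_apply, ite_and]

lemma fromChoi_choi (E : Matrix (Fin dA) (Fin dA) ℂ →ₗ[ℂ] Matrix (Fin dB) (Fin dB) ℂ) :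
    fromChoi (choi E) = E := by
  ext X b b'
  conv_rhs => rw [Matrix.matrix_eq_sum_single X]
  simp only [fromChoi, choi, LinearMap.coe_mk, AddHom.coe_mk, Matrix.of_apply, map_sum,
    Matrix.sum_apply]
  refine Finset.sum_congr rfl fun j _ => Finset.sum_congr rfl fun k _ => ?_
  rw [← smul_eq_mul, ← Matrix.smul_apply, ← map_smul, Matrix.smul_single, smul_eq_mul, mul_one]

noncomputable def choiEquiv :
    (Matrix (Fin dA) (Fin dA) ℂ →ₗ[ℂ] Matrix (Fin dB) (Fin dB) ℂ) ≃ₗ[ℂ]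
      Matrix (Fin dA × Fin dB) (Fin dA × Fin dB) ℂ where
  toFun := choi
  map_add' _ _ := rfl
  map_smul' _ _ := rfl
  invFun := fromChoi
  left_inv := fromChoi_choi
  right_inv := choi_fromChoi

lemma choiEquiv_apply (E : Matrix (Fin dA) (Fin dA) ℂ →ₗ[ℂ] Matrix (Fin dB) (Fin dB) ℂ) :
    choiEquiv E = choi E := rfl

lemma choi_injective :
    Function.Injective
      (choi : (Matrix (Fin dA) (Fin dA) ℂ →ₗ[ℂ] Matrix (Fin dB) (Fin dB) ℂ) → _) :=
  choiEquiv.injective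

lemma choi_smul (c : ℂ) (E : Matrix (Fin dA) (Fin dA) ℂ →ₗ[ℂ] Matrix (Fin dB) (Fin dB) ℂ) :
    choi (c • E) = c • choi E :=
  map_smul choiEquiv c E

lemma fromChoi_add (M N : Matrix (Fin dA × Fin dB) (Fin dA × Fin dB) ℂ) :
    fromChoi (M + N) = fromChoi M + fromChoi N :=
  map_add choiEquiv.symm M N

lemma fromChoi_sub (M N : Matrix (Fin dA × Fin dB) (Fin dA × Fin dB) ℂ) :
    fromChoi (M - N) = fromChoi M - fromChoi N :=
  map_sub choiEquiv.symm M N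

lemma trace_fromChoi (M : Matrix (Fin dA × Fin dB) (Fin dA × Fin dB) ℂ)
    (X : Matrix (Fin dA) (Fin dA) ℂ) :
    (fromChoi M X).trace = ∑ j, ∑ k, X j k * ptraceB M j k := by
  simp only [Matrix.trace, Matrix.diag, fromChoi, LinearMap.coe_mk, AddHom.coe_mk,
    Matrix.of_apply, ptraceB, Finset.mul_sum]
  rw [Finset.sum_comm]
  exact Finset.sum_congr rfl fun j _ => Finset.sum_comm

lemma ptraceB_choi_apply (E : Matrix (Fin dA) (Fin dA) ℂ →ₗ[ℂ] Matrix (Fin dB) (Fin dB) ℂ)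
    (a a' : Fin dA) : ptraceB (choi E) a a' = (E (Matrix.single a a' 1)).trace := rfl

lemma ptraceB_choi_of_isTP {E : Matrix (Fin dA) (Fin dA) ℂ →ₗ[ℂ] Matrix (Fin dB) (Fin dB) ℂ}
    (hE : IsTP E) : ptraceB (choi E) = 1 := by
  ext a a'
  rw [ptraceB_choi_apply, hE, Matrix.one_apply]
  split_ifs with h
  · rw [h, Matrix.trace_single_eq_same]
  · exact Matrix.trace_single_eq_of_ne _ _ _ h

lemma isTP_fromChoi {M : Matrix (Fin dA × Fin dB) (Fin dA × Fin dB) ℂ} (hM : ptraceB M = 1) :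
    IsTP (fromChoi M) := by
  intro X
  rw [trace_fromChoi, hM]
  simp [Matrix.one_apply, Matrix.trace]

lemma isTNI_fromChoi {M : Matrix (Fin dA × Fin dB) (Fin dA × Fin dB) ℂ}
    (hM : (1 - ptraceB M).PosSemidef) : IsTNI (fromChoi M) := by
  intro ρ hρ
  have hgap : ρ.trace - (fromChoi M ρ).trace = ∑ j, ∑ k, ρ j k * (1 - ptraceB M) j k := by
    rw [trace_fromChoi]
    simp [mul_sub, Matrix.one_apply, Matrix.trace]
  exact sub_nonneg.mp (hgap ▸ hρ.sum_mul_entries_nonneg hM)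

end Choi

section TwistedChannel

variable {dA dB : ℕ}

def SDPFeasible (J : Matrix (Fin dA × Fin dB) (Fin dA × Fin dB) ℂ) (α : ℝ) : Prop :=
  ∃ Mp Mn : Matrix (Fin dA × Fin dB) (Fin dA × Fin dB) ℂ,
    Mp.PosSemidef ∧ Mn.PosSemidef ∧ J = Mp - Mn ∧ ptraceB (Mp + Mn) = (α : ℂ) • 1

namespace SDPFeasible

variable {J : Matrix (Fin dA × Fin dB) (Fin dA × Fin dB) ℂ} {α : ℝ}

lemma smul (h : SDPFeasible J α) {c : ℝ} (hc : 0 ≤ c) :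
    SDPFeasible ((c : ℂ) • J) (c * α) := by
  obtain ⟨Mp, Mn, hp, hn, hJ, htr⟩ := h
  have hc' : (0 : ℂ) ≤ c := Complex.zero_le_real.mpr hc
  refine ⟨(c : ℂ) • Mp, (c : ℂ) • Mn, hp.smul hc', hn.smul hc', by rw [hJ, smul_sub], ?_⟩
  rw [← smul_add, ptraceB_smul, htr, smul_smul, Complex.ofReal_mul]

lemma nonneg [Nonempty (Fin dA)] (h : SDPFeasible J α) : 0 ≤ α := by
  obtain ⟨Mp, Mn, hp, hn, -, htr⟩ := h
  obtain ⟨a⟩ := ‹Nonempty (Fin dA)›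
  have hdiag := (hp.add hn).ptraceB.diag_nonneg (i := a)
  rw [htr] at hdiag
  simpa using hdiag

lemma eq_zero (h : SDPFeasible J 0) : J = 0 := by
  obtain ⟨Mp, Mn, hp, hn, hJ, htr⟩ := h
  have htrace : Mp.trace + Mn.trace = 0 := by
    rw [← Matrix.trace_add, ← trace_ptraceB, htr]
    simp
  rw [add_eq_zero_iff_of_nonneg hp.trace_nonneg hn.trace_nonneg, hp.trace_eq_zero_iff,
    hn.trace_eq_zero_iff] at htrace
  rw [hJ, htrace.1, htrace.2, sub_zero]

end SDPFeasible

lemma choi_sum_smul {n : ℕ} (s : Fin n → ℂ)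
    (M : Fin n → Matrix (Fin dA) (Fin dA) ℂ →ₗ[ℂ] Matrix (Fin dB) (Fin dB) ℂ) :
    choi (∑ j, s j • M j) = ∑ j, s j • choi (M j) := by
  simp only [← choiEquiv_apply, map_sum, map_smul]

theorem twistedChannel_iff_sdpFeasible
    {T : Matrix (Fin dA) (Fin dA) ℂ →ₗ[ℂ] Matrix (Fin dB) (Fin dB) ℂ} :
    TwistedChannel T ↔ SDPFeasible (choi T) 1 := by
  classical
  constructor
  · rintro ⟨n, s, M, hs, hM, ⟨-, hTP⟩, rfl⟩
    refine ⟨∑ j ∈ .filter (s · = 1) .univ, choi (M j), ∑ j ∈ .filter (¬s · = 1) .univ, choi (M j),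
      Matrix.posSemidef_sum _ fun j _ => (hM j).1, Matrix.posSemidef_sum _ fun j _ => (hM j).1,
      ?_, ?_⟩
    · rw [choi_sum_smul, ← Finset.sum_filter_add_sum_filter_not _ (s · = 1), sub_eq_add_neg,
        ← Finset.sum_neg_distrib]
      congr 1 <;> refine Finset.sum_congr rfl fun j hj => ?_
      · rw [(Finset.mem_filter.1 hj).2, one_smul]
      · rw [(hs j).resolve_left (Finset.mem_filter.1 hj).2, neg_one_smul]
    · have hsum := choi_sum_smul (fun _ => 1) M
      simp only [one_smul] at hsum
      rw [Finset.sum_filter_add_sum_filter_not, ← hsum, ptraceB_choi_of_isTP hTP,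
        Complex.ofReal_one, one_smul]
  · rintro ⟨P, N, hP, hN, hT, htr⟩
    rw [Complex.ofReal_one, one_smul] at htr
    have hcompl_P : 1 - ptraceB P = ptraceB N := by
      rw [← htr, ptraceB_add, add_sub_cancel_left]
    have hcompl_N : 1 - ptraceB N = ptraceB P := by
      rw [← htr, ptraceB_add, add_sub_cancel_right]
    refine ⟨2, ![1, -1], ![fromChoi P, fromChoi N], ?_, ?_, ?_, ?_⟩
    · intro j
      fin_cases j <;> simp
    · intro j
      fin_cases j
      · exact ⟨(choi_fromChoi P).symm ▸ hP, isTNI_fromChoi (hcompl_P ▸ hN.ptraceB)⟩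
      · exact ⟨(choi_fromChoi N).symm ▸ hN, isTNI_fromChoi (hcompl_N ▸ hP.ptraceB)⟩
    · rw [Fin.sum_univ_two]
      simp only [Matrix.cons_val_zero, Matrix.cons_val_one, ← fromChoi_add]
      exact ⟨(choi_fromChoi _).symm ▸ hP.add hN, isTP_fromChoi htr⟩
    · rw [← fromChoi_choi T, hT, fromChoi_sub, Fin.sum_univ_two]
      simp only [Matrix.cons_val_zero, Matrix.cons_val_one, one_smul, sub_eq_add_neg]
      exact congrArg _ (neg_one_smul ℂ _).symm

end TwistedChannel

section Cost

variable {dA dB : ℕ} {E : Matrix (Fin dA) (Fin dA) ℂ →ₗ[ℂ] Matrix (Fin dB) (Fin dB) ℂ} {α : ℝ}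

lemma sdpFeasible_choi_smul {T : Matrix (Fin dA) (Fin dA) ℂ →ₗ[ℂ] Matrix (Fin dB) (Fin dB) ℂ}
    (hT : TwistedChannel T) (hα : 0 ≤ α) : SDPFeasible (choi ((α : ℂ) • T)) α := by
  simpa [choi_smul] using (twistedChannel_iff_sdpFeasible.1 hT).smul hα

lemma exists_twistedChannel_smul_eq (h : SDPFeasible (choi E) α) (hα : 0 < α) :
    ∃ T, TwistedChannel T ∧ E = (α : ℂ) • T := by
  have hα' : (α : ℂ) ≠ 0 := Complex.ofReal_ne_zero.2 hα.ne'
  refine ⟨fromChoi ((α : ℂ)⁻¹ • choi E), ?_, ?_⟩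
  · rw [twistedChannel_iff_sdpFeasible, choi_fromChoi]
    simpa [inv_mul_cancel₀ hα.ne'] using h.smul (inv_nonneg.2 hα.le)
  · apply choi_injective
    rw [choi_smul, choi_fromChoi, smul_smul, mul_inv_cancel₀ hα', one_smul]

lemma exists_twistedChannel_smul_eq_iff [Nonempty (Fin dA)]
    (hT₀ : ∃ T : Matrix (Fin dA) (Fin dA) ℂ →ₗ[ℂ] Matrix (Fin dB) (Fin dB) ℂ, TwistedChannel T) :
    (0 ≤ α ∧ ∃ T, TwistedChannel T ∧ E = (α : ℂ) • T) ↔ SDPFeasible (choi E) α := by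
  refine ⟨fun ⟨hα, T, hT, hE⟩ => hE ▸ sdpFeasible_choi_smul hT hα, fun h => ?_⟩
  rcases h.nonneg.eq_or_lt with rfl | hα
  · obtain ⟨T, hT⟩ := hT₀
    have hE : E = 0 := choi_injective (h.eq_zero.trans (map_zero choiEquiv).symm)
    exact ⟨le_rfl, T, hT, by simp [hE]⟩
  · exact ⟨hα.le, exists_twistedChannel_smul_eq h hα⟩

end Cost

lemma Real.sInf_eq_zero_of_Ioi_subset {s : Set ℝ} (hpos : Set.Ioi 0 ⊆ s)
    (hnonneg : s ⊆ Set.Ici 0) : sInf s = 0 :=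
  le_antisymm ((csInf_le_csInf ⟨0, hnonneg⟩ Set.nonempty_Ioi hpos).trans_eq csInf_Ioi)
    (Real.sInf_nonneg hnonneg)

theorem cost_sdp_general {dA dB : ℕ} (E : Matrix (Fin dA) (Fin dA) ℂ →ₗ[ℂ] Matrix (Fin dB) (Fin dB) ℂ) :
    sInf {α : ℝ | 0 ≤ α ∧ ∃ T : Matrix (Fin dA) (Fin dA) ℂ →ₗ[ℂ] Matrix (Fin dB) (Fin dB) ℂ, TwistedChannel T ∧ E = (α : ℂ) • T} =
    sInf {α : ℝ | ∃ Mp Mn : Matrix (Fin dA × Fin dB) (Fin dA × Fin dB) ℂ,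
      Mp.PosSemidef ∧ Mn.PosSemidef ∧ choi E = Mp - Mn ∧
      ptraceB (Mp + Mn) = (α : ℂ) • (1 : Matrix (Fin dA) (Fin dA) ℂ)} := by
  change _ = sInf {α : ℝ | SDPFeasible (choi E) α}
  rcases isEmpty_or_nonempty (Fin dA) with hA | hA
  · have hfeas (α : ℝ) : SDPFeasible (choi E) α :=
      ⟨0, 0, .zero, .zero, Subsingleton.elim _ _, Subsingleton.elim _ _⟩
    simp only [hfeas, Set.ofPred_true, Real.sInf_univ]
    exact Real.sInf_eq_zero_of_Ioi_subset
      (fun α hα => ⟨le_of_lt hα, exists_twistedChannel_smul_eq (hfeas α) hα⟩) fun α h => h.1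
  by_cases hT₀ : ∃ T : Matrix (Fin dA) (Fin dA) ℂ →ₗ[ℂ] Matrix (Fin dB) (Fin dB) ℂ,
      TwistedChannel T
  · simp only [exists_twistedChannel_smul_eq_iff hT₀]
  · have hempty : {α : ℝ | 0 ≤ α ∧ ∃ T, TwistedChannel T ∧ E = (α : ℂ) • T} = ∅ :=
      Set.eq_empty_of_forall_notMem fun _ ⟨_, T, hT, _⟩ => hT₀ ⟨T, hT⟩
    have hzero : {α : ℝ | SDPFeasible (choi E) α} ⊆ {0} := fun α h =>
      h.nonneg.eq_or_lt.elim Eq.symm fun hα =>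
        (hT₀ ((exists_twistedChannel_smul_eq h hα).imp fun _ => And.left)).elim
    rw [hempty, Real.sInf_empty]
    rcases Set.subset_singleton_iff_eq.1 hzero with h | h <;> simp [h]

theorem cost_sdp {dA dB : ℕ} (E : Matrix (Fin dA) (Fin dA) ℂ →ₗ[ℂ] Matrix (Fin dB) (Fin dB) ℂ) (hE : HermitianPreserving E) :
    sInf {α : ℝ | 0 ≤ α ∧ ∃ T : Matrix (Fin dA) (Fin dA) ℂ →ₗ[ℂ] Matrix (Fin dB) (Fin dB) ℂ, TwistedChannel T ∧ E = (α : ℂ) • T} =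
    sInf {α : ℝ | ∃ Mp Mn : Matrix (Fin dA × Fin dB) (Fin dA × Fin dB) ℂ,
      Mp.PosSemidef ∧ Mn.PosSemidef ∧ choi E = Mp - Mn ∧
      ptraceB (Mp + Mn) = (α : ℂ) • (1 : Matrix (Fin dA) (Fin dA) ℂ)} :=
  cost_sdp_general E
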